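/- arXiv:2411.07651 — 3 statements merged into one kernel-verified Lean document; each statement's English description precedes it below -/
import Mathlib

section
/- Let (Y_n) be a sequence of ℕ-valued random variables with natural filtration (G_n) such that P(Y_{n+1} = y | G_n) = p_{g_n}(y) = ∑_{j=1}^d k(y|ϑ_j) g_n(ϑ_j), where g_{n+1}(ϑ_j) = (1-α_{n+1}) g_n(ϑ_j) + α_{n+1} k(Y_{n+1}|ϑ_j) g_n(ϑ_j) / ∑_i k(Y_{n+1}|ϑ_i) g_n(ϑ_i) with α_n ∈ (0,1). Then for each j, (g_n(ϑ_j))_{n≥0} is a bounded martingale with respect to (G_n): E[g_{n+1}(ϑ_j) | G_n] = g_n(ϑ_j). -/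
/-! Given `𝒢ₙ`, the posterior weight `w(y) = k(y|ϑⱼ) gₙ(ϑⱼ) / p_{gₙ}(y)` is `𝒢ₙ`-measurable, so
`E[w(Yₙ₊₁) | 𝒢ₙ] = ∑_y w(y) P(Yₙ₊₁ = y | 𝒢ₙ) = ∑_y k(y|ϑⱼ) gₙ(ϑⱼ) = gₙ(ϑⱼ)`, because the Poisson
kernel sums to one in `y`. Newton's update `gₙ₊₁(ϑⱼ)` is an affine combination of `gₙ(ϑⱼ)` and
`w(Yₙ₊₁)`, so its conditional expectation is `gₙ(ϑⱼ)`. -/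

open MeasureTheory

/-- The Poisson kernel `k(y|θ) = e^{-θ} θ^y / y!`. -/
noncomputable def poissonK (θ : ℝ) (y : ℕ) : ℝ :=
  Real.exp (-θ) * θ ^ y / (Nat.factorial y)

lemma poissonK_pos {θ : ℝ} (hθ : 0 < θ) (y : ℕ) : 0 < poissonK θ y := by
  unfold poissonK
  positivity

lemma hasSum_poissonK (θ : ℝ) : HasSum (poissonK θ) 1 := by
  have h := (NormedSpace.expSeries_div_hasSum_exp θ).mul_left (Real.exp (-θ))
  rw [← Real.exp_eq_exp_ℝ, ← Real.exp_add, neg_add_cancel, Real.exp_zero] at h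
  unfold poissonK
  simpa only [mul_div_assoc] using h

lemma abs_le_one_of_sum_eq_one {ι : Type*} [Fintype ι] {G : ι → ℝ} (hG : ∀ i, 0 ≤ G i)
    (hG1 : ∑ i, G i = 1) (j : ι) : |G j| ≤ 1 := by
  rw [abs_of_nonneg (hG j), ← hG1]
  exact Finset.single_le_sum (fun i _ => hG i) (Finset.mem_univ j)

section Newton

variable {ι : Type*} [Fintype ι] (ϑ G : ι → ℝ)

/-- The mixture `p_G` of the paper. -/
noncomputable def poissonMixture (y : ℕ) : ℝ :=
  ∑ i, poissonK (ϑ i) y * G i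

noncomputable def newtonPosterior (j : ι) (y : ℕ) : ℝ :=
  poissonK (ϑ j) y * G j / poissonMixture ϑ G y

variable {ϑ G}

lemma poissonMixture_pos (hϑ : ∀ i, 0 < ϑ i) (hG : ∀ i, 0 ≤ G i) (hG1 : ∑ i, G i = 1)
    (y : ℕ) : 0 < poissonMixture ϑ G y := by
  obtain ⟨i, -, hi⟩ : ∃ i ∈ Finset.univ, (0 : ℝ) < G i :=
    Finset.exists_lt_of_sum_lt (by simp [hG1])
  exact Finset.sum_pos' (fun i _ => mul_nonneg (poissonK_pos (hϑ i) y).le (hG i))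
    ⟨i, Finset.mem_univ i, mul_pos (poissonK_pos (hϑ i) y) hi⟩

lemma newtonPosterior_nonneg (hϑ : ∀ i, 0 < ϑ i) (hG : ∀ i, 0 ≤ G i) (j : ι) (y : ℕ) :
    0 ≤ newtonPosterior ϑ G j y :=
  div_nonneg (mul_nonneg (poissonK_pos (hϑ j) y).le (hG j))
    (Finset.sum_nonneg fun i _ => mul_nonneg (poissonK_pos (hϑ i) y).le (hG i))

lemma newtonPosterior_le_one (hϑ : ∀ i, 0 < ϑ i) (hG : ∀ i, 0 ≤ G i) (hG1 : ∑ i, G i = 1)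
    (j : ι) (y : ℕ) : newtonPosterior ϑ G j y ≤ 1 := by
  rw [newtonPosterior, div_le_one (poissonMixture_pos hϑ hG hG1 y)]
  exact Finset.single_le_sum (fun i _ => mul_nonneg (poissonK_pos (hϑ i) y).le (hG i))
    (Finset.mem_univ j)

lemma newtonPosterior_mul_poissonMixture (hϑ : ∀ i, 0 < ϑ i) (hG : ∀ i, 0 ≤ G i)
    (hG1 : ∑ i, G i = 1) (j : ι) (y : ℕ) :
    newtonPosterior ϑ G j y * poissonMixture ϑ G y = poissonK (ϑ j) y * G j :=
  div_mul_cancel₀ _ (poissonMixture_pos hϑ hG hG1 y).ne'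

end Newton

section CondExp

variable {Ω ι : Type*} {m m0 : MeasurableSpace Ω} {μ : Measure Ω}

lemma integrable_of_condExp_ae_eq_of_ne_zero [NeZero μ] {f h : Ω → ℝ}
    (hfh : μ[f | m] =ᵐ[μ] h) (h_ne : ∀ ω, h ω ≠ 0) : Integrable f μ := by
  by_contra hf
  rw [condExp_of_not_integrable hf] at hfh
  obtain ⟨ω, hω⟩ := hfh.exists
  exact h_ne ω hω.symm

lemma integrable_apply_of_sum_eq_one [IsFiniteMeasure μ] [Fintype ι] {G : Ω → ι → ℝ}
    (hG : ∀ i, AEStronglyMeasurable (fun ω => G ω i) μ)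
    (hG_pmf : ∀ ω, (∀ i, 0 ≤ G ω i) ∧ ∑ i, G ω i = 1) (j : ι) :
    Integrable (fun ω => G ω j) μ :=
  .of_bound (hG j) 1 (ae_of_all _ fun ω => abs_le_one_of_sum_eq_one (hG_pmf ω).1 (hG_pmf ω).2 j)

lemma condExp_tsum_ae_eq_tsum_mul [Countable ι] (hm : m ≤ m0) [SigmaFinite (μ.trim hm)]
    {F : ι → Ω → ℝ} {c : ι → ℝ} {h : Ω → ℝ} (hF_nonneg : ∀ i ω, 0 ≤ F i ω)
    (hF : ∀ i, Integrable (F i) μ) (hF_sum : Integrable (fun ω => ∑' i, F i ω) μ)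
    (hc : Summable c) (hh : AEStronglyMeasurable[m] h μ) (hh_int : Integrable h μ)
    (hFc : ∀ i, μ[F i | m] =ᵐ[μ] fun ω => c i * h ω) :
    μ[fun ω => ∑' i, F i ω | m] =ᵐ[μ] fun ω => (∑' i, c i) * h ω := by
  refine (ae_eq_condExp_of_forall_setIntegral_eq hm hF_sum
    (fun s _ _ => (hh_int.const_mul _).integrableOn) (fun s hs _ => ?_) (hh.const_mul _)).symm
  have hFs : ∀ i, ∫ ω in s, F i ω ∂μ = c i * ∫ ω in s, h ω ∂μ := fun i => by
    rw [← setIntegral_condExp hm (hF i) hs,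
      setIntegral_congr_ae (hm s hs) ((hFc i).mono fun _ hω _ => hω), integral_const_mul]
  have hFs_norm : ∀ i, ∫ ω in s, ‖F i ω‖ ∂μ = c i * ∫ ω in s, h ω ∂μ := fun i => by
    simp_rw [Real.norm_of_nonneg (hF_nonneg i _)]
    exact hFs i
  rw [integral_const_mul, ← integral_tsum_of_summable_integral_norm (fun i => (hF i).restrict)
    (by simpa only [hFs_norm] using hc.mul_right _), ← tsum_mul_right]
  simp_rw [hFs]

lemma aestronglyMeasurable_comp_of_aestronglyMeasurable_ite [Countable ι] [DecidableEq ι]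
    {Y : Ω → ι} {w : ι → Ω → ℝ} (hw : ∀ i, AEStronglyMeasurable (w i) μ)
    (hY : ∀ i, AEStronglyMeasurable (fun ω => if Y ω = i then (1 : ℝ) else 0) μ) :
    AEStronglyMeasurable (fun ω => w (Y ω) ω) μ := by
  have hw_sum : ∀ ω, HasSum (fun i => w i ω * if Y ω = i then 1 else 0) (w (Y ω) ω) := fun ω => by
    simpa using hasSum_single (f := fun i => w i ω * if Y ω = i then (1 : ℝ) else 0) (Y ω)
      fun i hi => by simp [Ne.symm hi]
  refine aestronglyMeasurable_of_tendsto_ae (SummationFilter.unconditional ι).filter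
    (fun s => Finset.aestronglyMeasurable_sum s fun i _ => (hw i).mul (hY i))
    (ae_of_all _ fun ω => ?_)
  simp only [Finset.sum_apply, Pi.mul_apply]
  exact hw_sum ω

lemma condExp_comp_ae_eq_tsum_mul [Countable ι] [DecidableEq ι] (hm : m ≤ m0) [IsFiniteMeasure μ]
    {Y : Ω → ι} {w q : ι → Ω → ℝ} {c : ι → ℝ} {h : Ω → ℝ} {C : ℝ}
    (hw : ∀ i, StronglyMeasurable[m] (w i)) (hw_nonneg : ∀ i ω, 0 ≤ w i ω)
    (hwC : ∀ i ω, w i ω ≤ C)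
    (hY : ∀ i, Integrable (fun ω => if Y ω = i then (1 : ℝ) else 0) μ)
    (hq : ∀ i, μ[fun ω => if Y ω = i then (1 : ℝ) else 0 | m] =ᵐ[μ] q i)
    (hwq : ∀ i ω, w i ω * q i ω = c i * h ω) (hc : Summable c)
    (hh : StronglyMeasurable[m] h) (hh_int : Integrable h μ) :
    Integrable (fun ω => w (Y ω) ω) μ ∧
      μ[fun ω => w (Y ω) ω | m] =ᵐ[μ] fun ω => (∑' i, c i) * h ω := by
  set F : ι → Ω → ℝ := fun i ω => w i ω * if Y ω = i then 1 else 0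
  have hw_norm : ∀ i ω, ‖w i ω‖ ≤ C := fun i ω =>
    (Real.norm_of_nonneg (hw_nonneg i ω)).trans_le (hwC i ω)
  have hF : ∀ i, Integrable (F i) μ := fun i =>
    (hY i).bdd_mul ((hw i).mono hm).aestronglyMeasurable (ae_of_all _ (hw_norm i))
  have hFc : ∀ i, μ[F i | m] =ᵐ[μ] fun ω => c i * h ω := fun i =>
    (condExp_mul_of_stronglyMeasurable_left (hw i) (hF i) (hY i)).trans
      ((hq i).mono fun ω hω => by rw [Pi.mul_apply, hω, hwq])
  have hwY : (fun ω => w (Y ω) ω) = fun ω => ∑' i, F i ω := by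
    ext ω
    rw [tsum_eq_single (Y ω) fun i hi => by simp [F, Ne.symm hi]]
    simp [F]
  have hwY_int : Integrable (fun ω => w (Y ω) ω) μ :=
    .of_bound (aestronglyMeasurable_comp_of_aestronglyMeasurable_ite
      (fun i => ((hw i).mono hm).aestronglyMeasurable) fun i => (hY i).1) C
      (ae_of_all _ fun ω => hw_norm _ ω)
  refine ⟨hwY_int, ?_⟩
  rw [hwY] at hwY_int ⊢
  exact condExp_tsum_ae_eq_tsum_mul hm (fun i ω => mul_nonneg (hw_nonneg i ω) (by positivity))
    hF hwY_int hc hh.aestronglyMeasurable hh_int hFc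

lemma condExp_one_sub_smul_add_smul_ae_eq (hm : m ≤ m0) [SigmaFinite (μ.trim hm)]
    {h X : Ω → ℝ} (hh : StronglyMeasurable[m] h) (hh_int : Integrable h μ)
    (hX : Integrable X μ) (hXh : μ[X | m] =ᵐ[μ] h) (a : ℝ) :
    μ[(1 - a) • h + a • X | m] =ᵐ[μ] h := by
  filter_upwards [condExp_add (hh_int.smul (1 - a)) (hX.smul a) m, condExp_smul (1 - a) h m,
    condExp_smul a X m, hXh] with ω h_add h_smul h_smul' hω
  rw [h_add, Pi.add_apply, h_smul, h_smul', condExp_of_stronglyMeasurable hm hh hh_int]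
  simp only [Pi.smul_apply, smul_eq_mul, hω]
  ring

end CondExp

lemma condExp_newtonPosterior_ae_eq {Ω ι : Type*} [Fintype ι] {m m0 : MeasurableSpace Ω}
    {μ : Measure Ω} [IsFiniteMeasure μ] [NeZero μ] (hm : m ≤ m0) {ϑ : ι → ℝ} (hϑ : ∀ i, 0 < ϑ i)
    {G : Ω → ι → ℝ} (hG : ∀ i, StronglyMeasurable[m] fun ω => G ω i)
    (hG_pmf : ∀ ω, (∀ i, 0 ≤ G ω i) ∧ ∑ i, G ω i = 1) {Y : Ω → ℕ}
    (hY : ∀ y, μ[fun ω => if Y ω = y then (1 : ℝ) else 0 | m]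
      =ᵐ[μ] fun ω => poissonMixture ϑ (G ω) y) (j : ι) :
    Integrable (fun ω => newtonPosterior ϑ (G ω) j (Y ω)) μ ∧
      μ[fun ω => newtonPosterior ϑ (G ω) j (Y ω) | m] =ᵐ[μ] fun ω => G ω j := by
  have hG_int := integrable_apply_of_sum_eq_one (μ := μ)
    (fun i => ((hG i).mono hm).aestronglyMeasurable) hG_pmf
  have hpost_meas : ∀ y, StronglyMeasurable[m] fun ω => newtonPosterior ϑ (G ω) j y := fun y =>
    (((hG j).measurable.const_mul _).div
      (Finset.measurable_sum _ fun i _ => (hG i).measurable.const_mul _)).stronglyMeasurable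
  have hY_int : ∀ y, Integrable (fun ω => if Y ω = y then (1 : ℝ) else 0) μ := fun y =>
    integrable_of_condExp_ae_eq_of_ne_zero (hY y) fun ω =>
      (poissonMixture_pos hϑ (hG_pmf ω).1 (hG_pmf ω).2 y).ne'
  simpa only [(hasSum_poissonK (ϑ j)).tsum_eq, one_mul] using
    condExp_comp_ae_eq_tsum_mul hm hpost_meas
      (fun y ω => newtonPosterior_nonneg hϑ (hG_pmf ω).1 j y)
      (fun y ω => newtonPosterior_le_one hϑ (hG_pmf ω).1 (hG_pmf ω).2 j y) hY_int hY
      (fun y ω => newtonPosterior_mul_poissonMixture hϑ (hG_pmf ω).1 (hG_pmf ω).2 j y)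
      (hasSum_poissonK (ϑ j)).summable (hG j) (hG_int j)

theorem newton_iterates_martingale_general
    {Ω : Type*} {m0 : MeasurableSpace Ω} (μ : Measure Ω) [IsProbabilityMeasure μ]
    (𝒢 : Filtration ℕ m0) (d : ℕ) (ϑ : Fin d → ℝ) (hϑ : ∀ j, 0 < ϑ j)
    (Y : ℕ → Ω → ℕ) (α : ℕ → ℝ)
    (g : ℕ → Ω → Fin d → ℝ)
    (hadapt : ∀ n j, StronglyMeasurable[𝒢 n] (fun ω => g n ω j))
    (hpmf : ∀ n ω, (∀ j, 0 ≤ g n ω j) ∧ ∑ j, g n ω j = 1)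
    (hrec : ∀ n ω j, g (n + 1) ω j =
      (1 - α (n + 1)) * g n ω j +
        α (n + 1) * (poissonK (ϑ j) (Y (n + 1) ω) * g n ω j /
          ∑ i, poissonK (ϑ i) (Y (n + 1) ω) * g n ω i))
    (hcond : ∀ (n : ℕ) (y : ℕ),
      μ[(fun ω => if Y (n + 1) ω = y then (1 : ℝ) else 0) | 𝒢 n]
        =ᵐ[μ] fun ω => ∑ j, poissonK (ϑ j) y * g n ω j) :
    ∀ j, (∀ n ω, |g n ω j| ≤ 1) ∧ Martingale (fun n ω => g n ω j) 𝒢 μ := by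
  intro j
  have hg_int : ∀ n, Integrable (fun ω => g n ω j) μ := fun n =>
    integrable_apply_of_sum_eq_one (fun i => ((hadapt n i).mono (𝒢.le n)).aestronglyMeasurable)
      (hpmf n) j
  refine ⟨fun n ω => abs_le_one_of_sum_eq_one (hpmf n ω).1 (hpmf n ω).2 j,
    martingale_nat (fun n => hadapt n j) hg_int fun n => ?_⟩
  obtain ⟨hpost_int, hpost⟩ :=
    condExp_newtonPosterior_ae_eq (𝒢.le n) hϑ (hadapt n) (hpmf n) (hcond n) j
  have hstep : (fun ω => g (n + 1) ω j) = (1 - α (n + 1)) • (fun ω => g n ω j) +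
      α (n + 1) • fun ω => newtonPosterior ϑ (g n ω) j (Y (n + 1) ω) :=
    funext fun ω => hrec n ω j
  rw [hstep]
  exact (condExp_one_sub_smul_add_smul_ae_eq (𝒢.le n) (hadapt n j) (hg_int n) hpost_int hpost
    (α (n + 1))).symm

/-- under Newton's algorithm, if the conditional law of `Y_{n+1}` given `𝒢_n`
is the mixture `p_{g_n}`, then for each grid point `ϑ_j` the sequence `(g_n(ϑ_j))` is a
bounded martingale with respect to `(𝒢_n)`. -/
theorem newton_iterates_martingale
    {Ω : Type*} {m0 : MeasurableSpace Ω} (μ : Measure Ω) [IsProbabilityMeasure μ]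
    (𝒢 : Filtration ℕ m0) (d : ℕ) (ϑ : Fin d → ℝ) (hϑ : ∀ j, 0 < ϑ j)
    (Y : ℕ → Ω → ℕ) (α : ℕ → ℝ) (hα : ∀ n, α n ∈ Set.Ioo (0 : ℝ) 1)
    (g : ℕ → Ω → Fin d → ℝ)
    (hadapt : ∀ n j, StronglyMeasurable[𝒢 n] (fun ω => g n ω j))
    (hpmf : ∀ n ω, (∀ j, 0 ≤ g n ω j) ∧ ∑ j, g n ω j = 1)
    (hrec : ∀ n ω j, g (n + 1) ω j =
      (1 - α (n + 1)) * g n ω j +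
        α (n + 1) * (poissonK (ϑ j) (Y (n + 1) ω) * g n ω j /
          ∑ i, poissonK (ϑ i) (Y (n + 1) ω) * g n ω i))
    (hcond : ∀ (n : ℕ) (y : ℕ),
      μ[(fun ω => if Y (n + 1) ω = y then (1 : ℝ) else 0) | 𝒢 n]
        =ᵐ[μ] fun ω => ∑ j, poissonK (ϑ j) y * g n ω j) :
    ∀ j, (∀ n ω, |g n ω j| ≤ 1) ∧ Martingale (fun n ω => g n ω j) 𝒢 μ :=
  newton_iterates_martingale_general μ 𝒢 d ϑ hϑ Y α g hadapt hpmf hrec hcond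
end

section
/- Under the learning model of Newton's algorithm (g_n a (G_n)-martingale taking values in probability mass functions on the finite grid Θ_d, with P(Y_{n+1}=y|G_n)=p_{g_n}(y)), the sequence of marginal mixture probabilities (p_{g_n}(y))_{n≥0} is also a bounded martingale for each fixed y ∈ ℕ, and consequently P(Y_{n+k}=y | G_n) = p_{g_n}(y) for all n ≥ 0 and k ≥ 1; in particular, the sequence (Y_n) is conditionally identically distributed. -/
open MeasureTheory

/-! Each `p_{g_n}(y)` is a fixed linear combination of the coordinates of `g_n`, hence a
martingale, and it is a convex combination of Poisson probabilities, hence in `[0, 1]`.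
For `k ≥ 1`, conditioning first on `𝒢_{n+k-1}` turns `P(Y_{n+k} = y | 𝒢_n)` into
`E[p_{g_{n+k-1}}(y) | 𝒢_n]`, which is `p_{g_n}(y)` by the martingale property. -/

theorem poissonK_nonneg {θ : ℝ} (hθ : 0 ≤ θ) (y : ℕ) : 0 ≤ poissonK θ y := by
  unfold poissonK
  positivity

theorem poissonK_le_one {θ : ℝ} (hθ : 0 ≤ θ) (y : ℕ) : poissonK θ y ≤ 1 := by
  calc poissonK θ y = Real.exp (-θ) * (θ ^ y / Nat.factorial y) := mul_div_assoc _ _ _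
    _ ≤ Real.exp (-θ) * Real.exp θ := by
        gcongr
        exact Real.pow_div_factorial_le_exp _ hθ y
    _ = 1 := by rw [← Real.exp_add, neg_add_cancel, Real.exp_zero]

theorem abs_sum_mul_le_one {ι : Type*} [Fintype ι] {c p : ι → ℝ} (hc0 : ∀ i, 0 ≤ c i)
    (hc1 : ∀ i, c i ≤ 1) (hp0 : ∀ i, 0 ≤ p i) (hp : ∑ i, p i = 1) :
    |∑ i, c i * p i| ≤ 1 := by
  rw [abs_of_nonneg (Finset.sum_nonneg fun i _ => mul_nonneg (hc0 i) (hp0 i)), ← hp]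
  exact Finset.sum_le_sum fun i _ => mul_le_of_le_one_left (hp0 i) (hc1 i)

namespace MeasureTheory.Martingale

variable {Ω E ι : Type*} {m0 : MeasurableSpace Ω} {μ : Measure Ω}
  [NormedAddCommGroup E] [NormedSpace ℝ E] [CompleteSpace E]

theorem finsetSum [Preorder ι] {ℱ : Filtration ι m0} {κ : Type*} (s : Finset κ)
    {f : κ → ι → Ω → E} (hf : ∀ k ∈ s, Martingale (f k) ℱ μ) :
    Martingale (∑ k ∈ s, f k) ℱ μ := by
  classical
  induction s using Finset.induction_on with
  | empty => simpa using martingale_zero E ℱ μ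
  | insert k s hks ih =>
    rw [Finset.sum_insert hks]
    exact (hf k (Finset.mem_insert_self k s)).add
      (ih fun k hk => hf k (Finset.mem_insert_of_mem hk))

theorem sum_const_mul [Preorder ι] {ℱ : Filtration ι m0} {κ : Type*} [Fintype κ]
    {F : ι → Ω → κ → ℝ} (hF : ∀ k, Martingale (fun n ω => F n ω k) ℱ μ) (c : κ → ℝ) :
    Martingale (fun n ω => ∑ k, c k * F n ω k) ℱ μ := by
  have hsum : (fun n ω => ∑ k, c k * F n ω k) = ∑ k, c k • fun n ω => F n ω k := by
    ext n ω
    simp only [Finset.sum_apply, Pi.smul_apply, smul_eq_mul]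
  rw [hsum]
  exact finsetSum _ fun k _ => (hF k).smul (c k)

theorem condExp_ae_eq_of_condExp_succ [IsFiniteMeasure μ] {𝒢 : Filtration ℕ m0}
    {M f : ℕ → Ω → E} (hM : Martingale M 𝒢 μ) (hf : ∀ n, μ[f (n + 1) | 𝒢 n] =ᵐ[μ] M n)
    {n m : ℕ} (hnm : n < m) : μ[f m | 𝒢 n] =ᵐ[μ] M n := by
  obtain ⟨k, rfl⟩ : ∃ k, m = k + 1 := ⟨m - 1, by omega⟩
  have hnk : n ≤ k := Nat.le_of_lt_succ hnm
  calc μ[f (k + 1) | 𝒢 n] =ᵐ[μ] μ[μ[f (k + 1) | 𝒢 k] | 𝒢 n] :=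
        (condExp_condExp_of_le (𝒢.mono hnk) (𝒢.le k)).symm
    _ =ᵐ[μ] μ[M k | 𝒢 n] := condExp_congr_ae (hf k)
    _ =ᵐ[μ] M n := hM.condExp_ae_eq hnk

end MeasureTheory.Martingale

theorem quasiBayes_cid_general
    {Ω : Type*} {m0 : MeasurableSpace Ω} (μ : Measure Ω) [IsProbabilityMeasure μ]
    (𝒢 : Filtration ℕ m0) (d : ℕ) (ϑ : Fin d → ℝ) (hϑ : ∀ j, 0 < ϑ j)
    (Y : ℕ → Ω → ℕ)
    (g : ℕ → Ω → Fin d → ℝ)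
    (hpmf : ∀ n ω, (∀ j, 0 ≤ g n ω j) ∧ ∑ j, g n ω j = 1)
    (hmart : ∀ j, Martingale (fun n ω => g n ω j) 𝒢 μ)
    (hcond : ∀ (n : ℕ) (y : ℕ),
      μ[(fun ω => if Y (n + 1) ω = y then (1 : ℝ) else 0) | 𝒢 n]
        =ᵐ[μ] fun ω => ∑ j, poissonK (ϑ j) y * g n ω j) :
    (∀ y : ℕ, (∀ n ω, |∑ j, poissonK (ϑ j) y * g n ω j| ≤ 1) ∧
        Martingale (fun n ω => ∑ j, poissonK (ϑ j) y * g n ω j) 𝒢 μ) ∧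
    (∀ (n k : ℕ) (y : ℕ), 1 ≤ k →
      μ[(fun ω => if Y (n + k) ω = y then (1 : ℝ) else 0) | 𝒢 n]
        =ᵐ[μ] fun ω => ∑ j, poissonK (ϑ j) y * g n ω j) ∧
    (∀ (n k : ℕ) (y : ℕ), 1 ≤ k →
      μ[(fun ω => if Y (n + k) ω = y then (1 : ℝ) else 0) | 𝒢 n]
        =ᵐ[μ] μ[(fun ω => if Y (n + 1) ω = y then (1 : ℝ) else 0) | 𝒢 n]) := by
  have hmix : ∀ y, Martingale (fun n ω => ∑ j, poissonK (ϑ j) y * g n ω j) 𝒢 μ :=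
    fun y => Martingale.sum_const_mul hmart fun j => poissonK (ϑ j) y
  have hpred : ∀ n k y, 1 ≤ k →
      μ[(fun ω => if Y (n + k) ω = y then (1 : ℝ) else 0) | 𝒢 n]
        =ᵐ[μ] fun ω => ∑ j, poissonK (ϑ j) y * g n ω j := fun n k y hk =>
    (hmix y).condExp_ae_eq_of_condExp_succ
      (f := fun m ω => if Y m ω = y then (1 : ℝ) else 0) (fun n => hcond n y) (by omega)
  refine ⟨fun y => ⟨fun n ω => ?_, hmix y⟩, hpred,
    fun n k y hk => (hpred n k y hk).trans (hcond n y).symm⟩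
  exact abs_sum_mul_le_one (fun j => poissonK_nonneg (hϑ j).le y)
    (fun j => poissonK_le_one (hϑ j).le y) (hpmf n ω).1 (hpmf n ω).2

/-- under the quasi-Bayes learning model (the random pmfs `g_n` on the finite
grid form a martingale, and `P(Y_{n+1}=y | 𝒢_n) = p_{g_n}(y)`), the marginal mixture
probabilities `(p_{g_n}(y))` form a bounded martingale for each `y`, and
`P(Y_{n+k}=y | 𝒢_n) = p_{g_n}(y)` for all `n ≥ 0`, `k ≥ 1`; in particular `(Y_n)` is
conditionally identically distributed. -/
theorem quasiBayes_cid
    {Ω : Type*} {m0 : MeasurableSpace Ω} (μ : Measure Ω) [IsProbabilityMeasure μ]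
    (𝒢 : Filtration ℕ m0) (d : ℕ) (ϑ : Fin d → ℝ) (hϑ : ∀ j, 0 < ϑ j)
    (Y : ℕ → Ω → ℕ)
    (g : ℕ → Ω → Fin d → ℝ)
    (hadapt : ∀ n j, StronglyMeasurable[𝒢 n] (fun ω => g n ω j))
    (hpmf : ∀ n ω, (∀ j, 0 ≤ g n ω j) ∧ ∑ j, g n ω j = 1)
    (hmart : ∀ j, Martingale (fun n ω => g n ω j) 𝒢 μ)
    (hcond : ∀ (n : ℕ) (y : ℕ),
      μ[(fun ω => if Y (n + 1) ω = y then (1 : ℝ) else 0) | 𝒢 n]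
        =ᵐ[μ] fun ω => ∑ j, poissonK (ϑ j) y * g n ω j) :
    (∀ y : ℕ, (∀ n ω, |∑ j, poissonK (ϑ j) y * g n ω j| ≤ 1) ∧
        Martingale (fun n ω => ∑ j, poissonK (ϑ j) y * g n ω j) 𝒢 μ) ∧
    (∀ (n k : ℕ) (y : ℕ), 1 ≤ k →
      μ[(fun ω => if Y (n + k) ω = y then (1 : ℝ) else 0) | 𝒢 n]
        =ᵐ[μ] fun ω => ∑ j, poissonK (ϑ j) y * g n ω j) ∧
    (∀ (n k : ℕ) (y : ℕ), 1 ≤ k →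
      μ[(fun ω => if Y (n + k) ω = y then (1 : ℝ) else 0) | 𝒢 n]
        =ᵐ[μ] μ[(fun ω => if Y (n + 1) ω = y then (1 : ℝ) else 0) | 𝒢 n]) :=
  quasiBayes_cid_general μ 𝒢 d ϑ hϑ Y g hpmf hmart hcond
end

section
/- (Conditional delta method, error control step) Under the assumptions of the delta method theorem above—r_n(g_n − g̃) converges in the almost-sure conditional sense to a P-a.s. tight kernel K, and h uniformly differentiable—for every ε > 0, the conditional probability P(‖r_n(h(g_n) − h(g̃)) − r_n Dh_{g̃}(g_n − g̃)‖ > ε | G_n) converges to 0 almost surely as n → ∞. -/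
open MeasureTheory ProbabilityTheory Filter Topology
open scoped ENNReal

/-!
Fix `ω` outside the exceptional null sets. The conditional laws of `r_n (g_n − g̃)` converge
weakly to the tight law `K ω`, so by the portmanteau theorem there is `M` with
`P(‖r_n (g_n − g̃)‖ ≥ M | 𝒢_n)(ω) < η` for all large `n`. On the complementary event
`‖g_n − g̃‖ < M / r_n`, which is below the `δ` of uniform differentiability at tolerance
`ε / M` once `r_n > M / δ`, the rescaled linearization error is at most `(ε / M) · M = ε`.
-/

theorem ProbabilityMeasure.eventually_measure_lt_of_tendsto {Ω ι : Type*} {L : Filter ι}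
    [MeasurableSpace Ω] [TopologicalSpace Ω] [OpensMeasurableSpace Ω]
    [HasOuterApproxClosed Ω] {μ : ProbabilityMeasure Ω} {μs : ι → ProbabilityMeasure Ω}
    (hμ : Tendsto μs L (𝓝 μ))
    {F : Set Ω} (hF : IsClosed F) {η : ℝ≥0∞} (hFη : (μ : Measure Ω) F < η) :
    ∀ᶠ i in L, (μs i : Measure Ω) F < η :=
  eventually_lt_of_limsup_lt
    ((ProbabilityMeasure.limsup_measure_closed_le_of_tendsto hμ hF).trans_lt hFη)

theorem setOf_le_norm_subset_exists_lt_abs {ι : Type*} [Fintype ι] {M₀ M : ℝ}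
    (hM : max M₀ 0 < M) : {x : ι → ℝ | M ≤ ‖x‖} ⊆ {x | ∃ i, M₀ < |x i|} := by
  refine fun x (hx : M ≤ ‖x‖) => show ∃ i, M₀ < |x i| from ?_
  by_contra! hsmall
  have : ‖x‖ ≤ max M₀ 0 := (pi_norm_le_iff_of_nonneg (le_max_right _ _)).mpr fun i =>
    (Real.norm_eq_abs (x i)).trans_le ((hsmall i).trans (le_max_left _ _))
  linarith

theorem exists_pos_measure_setOf_le_norm_lt {ι : Type*} [Fintype ι] {ν : Measure (ι → ℝ)}
    {η : ℝ≥0∞} (h : ∃ M₀ : ℝ, ν {x | ∃ i, M₀ < |x i|} < η) :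
    ∃ M > 0, ν {x | M ≤ ‖x‖} < η := by
  obtain ⟨M₀, hM₀⟩ := h
  exact ⟨max M₀ 0 + 1, by positivity,
    (measure_mono (setOf_le_norm_subset_exists_lt_abs (lt_add_one _))).trans_lt hM₀⟩

section Linearization

variable {E F : Type*} [NormedAddCommGroup E] [NormedSpace ℝ E]
  [NormedAddCommGroup F] [NormedSpace ℝ F]

theorem norm_lt_of_norm_smul_lt {v : E} {r M δ : ℝ} (hδ : 0 < δ) (hr : M / δ ≤ |r|)
    (hv : ‖r • v‖ < M) : ‖v‖ < δ := by
  by_contra! hvδ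
  rw [norm_smul, Real.norm_eq_abs] at hv
  have : M ≤ |r| * ‖v‖ := calc
    M = M / δ * δ := (div_mul_cancel₀ M hδ.ne').symm
    _ ≤ |r| * ‖v‖ := mul_le_mul hr hvδ hδ.le (abs_nonneg r)
  linarith

theorem norm_smul_sub_smul_apply_le {h : E → F} {L : E →L[ℝ] F} {x y : E} {c r : ℝ}
    (hlin : ‖h x - h y - L (x - y)‖ ≤ c * ‖x - y‖) :
    ‖r • (h x - h y) - r • L (x - y)‖ ≤ c * ‖r • (x - y)‖ := by
  rw [← smul_sub, norm_smul, norm_smul]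
  calc ‖r‖ * ‖h x - h y - L (x - y)‖ ≤ ‖r‖ * (c * ‖x - y‖) := by gcongr
    _ = c * (‖r‖ * ‖x - y‖) := by ring

variable {Δ : Set E} {h : E → F} {Dh : E → E →L[ℝ] F} {c δ : ℝ}

theorem linearization_bound_of_forall_ne
    (hunif : ∀ gs ∈ Δ, ∀ x ∈ Δ, x ≠ gs → ‖x - gs‖ < δ →
      ‖h x - h gs - Dh gs (x - gs)‖ < c * ‖x - gs‖)
    {gs x : E} (hgs : gs ∈ Δ) (hx : x ∈ Δ) (hclose : ‖x - gs‖ < δ) :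
    ‖h x - h gs - Dh gs (x - gs)‖ ≤ c * ‖x - gs‖ := by
  rcases eq_or_ne x gs with rfl | hne
  · simp
  · exact (hunif gs hgs x hx hne hclose).le

theorem norm_smul_linearization_error_le_of_norm_smul_lt {ε M : ℝ} (hε : 0 ≤ ε) (hM : 0 < M)
    (hδ : 0 < δ)
    (hunif : ∀ gs ∈ Δ, ∀ x ∈ Δ, x ≠ gs → ‖x - gs‖ < δ →
      ‖h x - h gs - Dh gs (x - gs)‖ < ε / M * ‖x - gs‖)
    {gs x : E} (hgs : gs ∈ Δ) (hx : x ∈ Δ) {r : ℝ} (hr : M / δ ≤ |r|)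
    (hrx : ‖r • (x - gs)‖ < M) :
    ‖r • (h x - h gs) - r • Dh gs (x - gs)‖ ≤ ε := calc
  _ ≤ ε / M * ‖r • (x - gs)‖ := norm_smul_sub_smul_apply_le
        (linearization_bound_of_forall_ne hunif hgs hx (norm_lt_of_norm_smul_lt hδ hr hrx))
  _ ≤ ε / M * M := by gcongr
  _ = ε := div_mul_cancel₀ ε hM.ne'

end Linearization

theorem conditional_delta_method_error_control_general
    {Ω : Type*} [m0 : MeasurableSpace Ω] [StandardBorelSpace Ω] [Nonempty Ω]
    (μ : Measure Ω) [IsProbabilityMeasure μ] (𝒢 : Filtration ℕ m0)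
    (d p : ℕ) (Δ : Set (Fin d → ℝ))
    (g : ℕ → Ω → Fin d → ℝ) (gt : Ω → Fin d → ℝ)
    (hgmeas : ∀ n, Measurable (g n)) (hgtmeas : Measurable gt)
    (hgΔ : ∀ n ω, g n ω ∈ Δ) (hgtΔ : ∀ ω, gt ω ∈ Δ)
    (r : ℕ → ℝ)
    (hrtop : Tendsto r atTop atTop)
    (K : Ω → Measure (Fin d → ℝ)) (hK : ∀ ω, IsProbabilityMeasure (K ω))
    (hKtight : ∀ᵐ ω ∂μ, ∀ η > (0 : ℝ≥0∞), ∃ M : ℝ,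
      K ω {x | ∃ i, M < |x i|} < η)
    (hconv : ∀ᵐ ω ∂μ, ∀ f : BoundedContinuousFunction (Fin d → ℝ) ℝ,
      Tendsto (fun n =>
          ∫ x, f x ∂((condExpKernel μ (𝒢 n) ω).map (fun ω' => r n • (g n ω' - gt ω'))))
        atTop (nhds (∫ x, f x ∂(K ω))))
    (h : (Fin d → ℝ) → (Fin p → ℝ))
    (Dh : (Fin d → ℝ) → ((Fin d → ℝ) →L[ℝ] (Fin p → ℝ)))
    (hunif : ∀ ε > (0 : ℝ), ∃ δ > (0 : ℝ), ∀ gs ∈ Δ, ∀ x ∈ Δ, x ≠ gs →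
      ‖x - gs‖ < δ → ‖h x - h gs - Dh gs (x - gs)‖ < ε * ‖x - gs‖) :
    ∀ ε > (0 : ℝ), ∀ᵐ ω ∂μ,
      Tendsto (fun n =>
          (condExpKernel μ (𝒢 n) ω)
            {ω' | ε < ‖r n • (h (g n ω') - h (gt ω'))
                        - r n • (Dh (gt ω') (g n ω' - gt ω'))‖})
        atTop (nhds 0) := by
  intro ε hε
  filter_upwards [hKtight, hconv] with ω htight hc
  have hφ : ∀ n, Measurable fun ω' => r n • (g n ω' - gt ω') :=
    fun n => ((hgmeas n).sub hgtmeas).const_smul (r n)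
  let ν : ℕ → ProbabilityMeasure (Fin d → ℝ) := fun n =>
    ⟨(condExpKernel μ (𝒢 n) ω).map (fun ω' => r n • (g n ω' - gt ω')),
      Measure.isProbabilityMeasure_map (hφ n).aemeasurable⟩
  have hν : Tendsto ν atTop (𝓝 ⟨K ω, hK ω⟩) :=
    ProbabilityMeasure.tendsto_iff_forall_integral_tendsto.mpr hc
  refine ENNReal.tendsto_nhds_zero.mpr fun η hη => ?_
  obtain ⟨M, hM, hKM⟩ := exists_pos_measure_setOf_le_norm_lt (htight η hη)
  have hclosed : IsClosed {x : Fin d → ℝ | M ≤ ‖x‖} :=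
    isClosed_le continuous_const continuous_norm
  obtain ⟨δ, hδ, hδunif⟩ := hunif (ε / M) (div_pos hε hM)
  filter_upwards [ProbabilityMeasure.eventually_measure_lt_of_tendsto hν hclosed hKM,
    hrtop.eventually_ge_atTop (M / δ)] with n hνn hrn
  calc _ ≤ condExpKernel μ (𝒢 n) ω
          ((fun ω' => r n • (g n ω' - gt ω')) ⁻¹' {x | M ≤ ‖x‖}) := by
        refine measure_mono fun ω' hω' => show M ≤ _ from le_of_not_gt fun hsmall => ?_
        exact hω'.not_ge (norm_smul_linearization_error_le_of_norm_smul_lt hε.le hM hδ hδunif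
          (hgtΔ ω') (hgΔ n ω') (hrn.trans (le_abs_self _)) hsmall)
    _ = (ν n : Measure (Fin d → ℝ)) {x | M ≤ ‖x‖} :=
        (Measure.map_apply (hφ n) hclosed.measurableSet).symm
    _ ≤ η := hνn.le

/-- error control step of the conditional delta method: under the
assumptions of the conditional delta method, for every `ε > 0` the conditional probability
`P(‖r_n(h(g_n) − h(g̃)) − r_n Dh_{g̃}(g_n − g̃)‖ > ε | 𝒢_n)` converges to `0` a.s. -/
theorem conditional_delta_method_error_control
    {Ω : Type*} [m0 : MeasurableSpace Ω] [StandardBorelSpace Ω] [Nonempty Ω]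
    (μ : Measure Ω) [IsProbabilityMeasure μ] (𝒢 : Filtration ℕ m0)
    (d p : ℕ) (Δ : Set (Fin d → ℝ)) (hΔ : Convex ℝ Δ)
    (g : ℕ → Ω → Fin d → ℝ) (gt : Ω → Fin d → ℝ)
    (hgmeas : ∀ n, Measurable (g n)) (hgtmeas : Measurable gt)
    (hgΔ : ∀ n ω, g n ω ∈ Δ) (hgtΔ : ∀ ω, gt ω ∈ Δ)
    (r : ℕ → ℝ) (hrpos : ∀ n, 0 < r n) (hrmono : Monotone r)
    (hrtop : Tendsto r atTop atTop)
    (K : Ω → Measure (Fin d → ℝ)) (hK : ∀ ω, IsProbabilityMeasure (K ω))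
    (hKtight : ∀ᵐ ω ∂μ, ∀ η > (0 : ℝ≥0∞), ∃ M : ℝ,
      K ω {x | ∃ i, M < |x i|} < η)
    (hconv : ∀ᵐ ω ∂μ, ∀ f : BoundedContinuousFunction (Fin d → ℝ) ℝ,
      Tendsto (fun n =>
          ∫ x, f x ∂((condExpKernel μ (𝒢 n) ω).map (fun ω' => r n • (g n ω' - gt ω'))))
        atTop (nhds (∫ x, f x ∂(K ω))))
    (h : (Fin d → ℝ) → (Fin p → ℝ))
    (Dh : (Fin d → ℝ) → ((Fin d → ℝ) →L[ℝ] (Fin p → ℝ)))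
    (hunif : ∀ ε > (0 : ℝ), ∃ δ > (0 : ℝ), ∀ gs ∈ Δ, ∀ x ∈ Δ, x ≠ gs →
      ‖x - gs‖ < δ → ‖h x - h gs - Dh gs (x - gs)‖ < ε * ‖x - gs‖) :
    ∀ ε > (0 : ℝ), ∀ᵐ ω ∂μ,
      Tendsto (fun n =>
          (condExpKernel μ (𝒢 n) ω)
            {ω' | ε < ‖r n • (h (g n ω') - h (gt ω'))
                        - r n • (Dh (gt ω') (g n ω' - gt ω'))‖})
        atTop (nhds 0) :=
  conditional_delta_method_error_control_general (m0 := m0) μ 𝒢 d p Δ g gt hgmeas hgtmeas hgΔ hgtΔ r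
    hrtop K hK hKtight hconv h Dh hunif
end
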